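/- arXiv:2101.09735 — 4 statements merged into one kernel-verified Lean document; each statement's English description precedes it below -/
import Mathlib

section
/- Let V be a Hilbert space, d : V → W a bounded linear map with closed range such that ‖v‖ ≤ c_P ‖d v‖ for all v ⟂ ker d. Suppose every v ∈ V decomposes orthogonally as v = v_B + v_⊥ with v_B ∈ R(d⁻) for a second bounded operator d⁻ : V⁻ → V with R(d⁻) closed, v_⊥ ∈ (ker d)^⊥, and R(d⁻) ⊆ ker d. Define b(τ, η; v) = ⟨d⁻ τ, v⟩ + ⟨η, d v⟩ for τ ∈ V⁻, η ∈ W. If in addition ‖τ‖ ≤ c_P ‖d⁻ τ‖ can be achieved for a preimage τ of v_B, then for every v ∈ V with ‖v‖² + ‖d v‖² = 1 there exist τ ∈ V⁻ and η ∈ W with ‖τ‖² + ‖d⁻ τ‖² + ‖η‖² ≤ C and b(τ, η; v) ≥ (1/2) min(1, c_P^{-2}). -/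
/-!
Split `v = v_B + v_⊥` with `v_B ∈ R(d⁻) ⊆ ker d` and `v_⊥ ⟂ ker d`, lift `v_B = d⁻ τ` with
`‖τ‖ ≤ c_P ‖v_B‖`, and test with `(τ, η) = (τ, d v)`. Orthogonality gives
`b(τ, d v; v) = ‖v_B‖² + ‖d v‖²`, while Poincaré on `v_⊥` gives
`1 = ‖v_B‖² + ‖v_⊥‖² + ‖d v‖² ≤ ‖v_B‖² + (1 + c_P²) ‖d v‖²`, so
`b ≥ (1 + c_P²)⁻¹ ≥ ½ min(1, c_P⁻²)`.
-/

open RealInnerProductSpace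

lemma half_mul_min_one_inv_sq_le_inv_one_add_sq (c : ℝ) :
    1 / 2 * min 1 (c⁻¹ ^ 2) ≤ (1 + c ^ 2)⁻¹ := by
  rcases le_total (c ^ 2) 1 with hc | hc
  · calc 1 / 2 * min 1 (c⁻¹ ^ 2) ≤ 1 / 2 := by
          have := min_le_left 1 (c⁻¹ ^ 2); linarith
      _ = (1 + 1)⁻¹ := by norm_num
      _ ≤ (1 + c ^ 2)⁻¹ := by gcongr
  · have hc0 : 0 < c ^ 2 := by linarith
    calc 1 / 2 * min 1 (c⁻¹ ^ 2) ≤ 1 / 2 * (c ^ 2)⁻¹ := by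
          rw [← inv_pow]; gcongr; exact min_le_right _ _
      _ = (c ^ 2 + c ^ 2)⁻¹ := by rw [← two_mul, mul_inv, one_div]
      _ ≤ (1 + c ^ 2)⁻¹ := by gcongr

lemma half_mul_min_one_inv_sq_le_add {a b c : ℝ} (ha : 0 ≤ a)
    (h : 1 ≤ a + (1 + c ^ 2) * b) : 1 / 2 * min 1 (c⁻¹ ^ 2) ≤ a + b := by
  refine (half_mul_min_one_inv_sq_le_inv_one_add_sq c).trans ?_
  rw [inv_le_iff_one_le_mul₀' (by positivity)]
  nlinarith [sq_nonneg c]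

section OrthogonalSplitting

variable {V W : Type*} [NormedAddCommGroup V] [InnerProductSpace ℝ V]
  [NormedAddCommGroup W] [InnerProductSpace ℝ W]
  {d : V →L[ℝ] W} {vB vp : V}

lemma inner_eq_zero_of_apply_eq_zero_of_mem_ker_orthogonal (hvB : d vB = 0)
    (hvp : vp ∈ (LinearMap.ker (d : V →ₗ[ℝ] W))ᗮ) : ⟪vB, vp⟫ = 0 :=
  Submodule.inner_right_of_mem_orthogonal (by simpa [LinearMap.mem_ker] using hvB) hvp

lemma norm_add_sq_of_apply_eq_zero_of_mem_ker_orthogonal (hvB : d vB = 0)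
    (hvp : vp ∈ (LinearMap.ker (d : V →ₗ[ℝ] W))ᗮ) :
    ‖vB + vp‖ ^ 2 = ‖vB‖ ^ 2 + ‖vp‖ ^ 2 := by
  rw [norm_add_sq_real, inner_eq_zero_of_apply_eq_zero_of_mem_ker_orthogonal hvB hvp]
  ring

lemma inner_add_self_of_apply_eq_zero_of_mem_ker_orthogonal (hvB : d vB = 0)
    (hvp : vp ∈ (LinearMap.ker (d : V →ₗ[ℝ] W))ᗮ) : ⟪vB, vB + vp⟫ = ‖vB‖ ^ 2 := by
  rw [inner_add_right, inner_eq_zero_of_apply_eq_zero_of_mem_ker_orthogonal hvB hvp,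
    real_inner_self_eq_norm_sq, add_zero]

lemma norm_add_sq_add_norm_apply_sq_le {c : ℝ}
    (hPoincare : ∀ v ∈ (LinearMap.ker (d : V →ₗ[ℝ] W))ᗮ, ‖v‖ ≤ c * ‖d v‖)
    (hvB : d vB = 0) (hvp : vp ∈ (LinearMap.ker (d : V →ₗ[ℝ] W))ᗮ) :
    ‖vB + vp‖ ^ 2 + ‖d (vB + vp)‖ ^ 2 ≤ ‖vB‖ ^ 2 + (1 + c ^ 2) * ‖d (vB + vp)‖ ^ 2 := by
  have hdv : d (vB + vp) = d vp := by rw [map_add, hvB, zero_add]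
  have hvp_sq : ‖vp‖ ^ 2 ≤ c ^ 2 * ‖d vp‖ ^ 2 := by
    rw [← mul_pow]; exact pow_le_pow_left₀ (norm_nonneg _) (hPoincare vp hvp) 2
  rw [norm_add_sq_of_apply_eq_zero_of_mem_ker_orthogonal hvB hvp, hdv]
  linarith

end OrthogonalSplitting

theorem stmt1_general
    {Vm V W : Type*} [NormedAddCommGroup Vm] [InnerProductSpace ℝ Vm]
    [NormedAddCommGroup V] [InnerProductSpace ℝ V]
    [NormedAddCommGroup W] [InnerProductSpace ℝ W]
    (dm : Vm →L[ℝ] V) (d : V →L[ℝ] W)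
    (hcomplex : ∀ τ : Vm, d (dm τ) = 0)
    (cP : ℝ)
    (hPoincare : ∀ v ∈ (LinearMap.ker (d : V →ₗ[ℝ] W))ᗮ, ‖v‖ ≤ cP * ‖d v‖)
    (hdecomp : ∀ v : V, ∃ vB ∈ Set.range dm, ∃ vp ∈ (LinearMap.ker (d : V →ₗ[ℝ] W))ᗮ, v = vB + vp)
    (hlift : ∀ w ∈ Set.range dm, ∃ τ : Vm, dm τ = w ∧ ‖τ‖ ≤ cP * ‖w‖) :
    ∃ C : ℝ, 0 < C ∧ ∀ v : V, ‖v‖ ^ 2 + ‖d v‖ ^ 2 = 1 →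
      ∃ (τ : Vm) (η : W), ‖τ‖ ^ 2 + ‖dm τ‖ ^ 2 + ‖η‖ ^ 2 ≤ C ∧
        ⟪dm τ, v⟫ + ⟪η, d v⟫ ≥ (1 / 2) * min 1 (cP⁻¹ ^ 2) := by
  refine ⟨cP ^ 2 + 2, by positivity, fun v hv => ?_⟩
  obtain ⟨vB, hvB, vp, hvp, rfl⟩ := hdecomp v
  obtain ⟨τ, rfl, hτ⟩ := hlift vB hvB
  have hdvB : d (dm τ) = 0 := hcomplex τ
  have hgraph := norm_add_sq_add_norm_apply_sq_le hPoincare hdvB hvp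
  have hpyth := norm_add_sq_of_apply_eq_zero_of_mem_ker_orthogonal hdvB hvp
  have hτ_sq : ‖τ‖ ^ 2 ≤ cP ^ 2 * ‖dm τ‖ ^ 2 := by
    rw [← mul_pow]; exact pow_le_pow_left₀ (norm_nonneg _) hτ 2
  refine ⟨τ, d (dm τ + vp), ?_, ?_⟩
  · nlinarith [sq_nonneg cP, sq_nonneg ‖vp‖, sq_nonneg ‖dm τ‖, sq_nonneg ‖d (dm τ + vp)‖]
  · rw [inner_add_self_of_apply_eq_zero_of_mem_ker_orthogonal hdvB hvp,
      real_inner_self_eq_norm_sq, ge_iff_le]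
    exact half_mul_min_one_inv_sq_le_add (sq_nonneg _) (hv.symm.le.trans hgraph)

/-- inf-sup condition for the bilinear form
`b(τ, η; v) = ⟨d⁻ τ, v⟩ + ⟨η, d v⟩` from the mixed formulation of the Hodge Laplacian. -/
theorem stmt1
    {Vm V W : Type*} [NormedAddCommGroup Vm] [InnerProductSpace ℝ Vm] [CompleteSpace Vm]
    [NormedAddCommGroup V] [InnerProductSpace ℝ V] [CompleteSpace V]
    [NormedAddCommGroup W] [InnerProductSpace ℝ W] [CompleteSpace W]
    (dm : Vm →L[ℝ] V) (d : V →L[ℝ] W)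
    (hrange_dm : IsClosed (Set.range dm)) (hrange_d : IsClosed (Set.range d))
    (hcomplex : ∀ τ : Vm, d (dm τ) = 0)
    (cP : ℝ) (hcP : 0 < cP)
    (hPoincare : ∀ v ∈ (LinearMap.ker (d : V →ₗ[ℝ] W))ᗮ, ‖v‖ ≤ cP * ‖d v‖)
    (hPoincare' : ∀ τ ∈ (LinearMap.ker (dm : Vm →ₗ[ℝ] V))ᗮ, ‖τ‖ ≤ cP * ‖dm τ‖)
    (hdecomp : ∀ v : V, ∃ vB ∈ Set.range dm, ∃ vp ∈ (LinearMap.ker (d : V →ₗ[ℝ] W))ᗮ, v = vB + vp)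
    (hlift : ∀ w ∈ Set.range dm, ∃ τ : Vm, dm τ = w ∧ ‖τ‖ ≤ cP * ‖w‖) :
    ∃ C : ℝ, 0 < C ∧ ∀ v : V, ‖v‖ ^ 2 + ‖d v‖ ^ 2 = 1 →
      ∃ (τ : Vm) (η : W), ‖τ‖ ^ 2 + ‖dm τ‖ ^ 2 + ‖η‖ ^ 2 ≤ C ∧
        ⟪dm τ, v⟫ + ⟪η, d v⟫ ≥ (1 / 2) * min 1 (cP⁻¹ ^ 2) :=
  stmt1_general dm d hcomplex cP hPoincare hdecomp hlift
end

section
/- In the abstract setting of a closed Hilbert complex (V⁻, d⁻) → (V, d) → W with Poincaré inequality constants c_P on orthogonal complements of kernels and trivial harmonic space, the mixed variational problem — find (σ, ξ, u) ∈ V⁻ × W × V with ⟨σ, τ⟩ + ⟨d⁻τ, u⟩ = 0, ⟨ξ, η⟩ + ⟨du, η⟩ = 0, ⟨d⁻σ, v⟩ + ⟨ξ, dv⟩ = −⟨f, v⟩ for all test functions — satisfies a continuous inf-sup condition: there exists C_cts > 0 depending only on c_P such that for all unit-norm (σ, ξ, u) there are unit-norm (τ, η, v) with B(σ, ξ, u;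 τ, η, v) ≥ C_cts, where B is the sum of all the bilinear forms and norms are ‖σ‖²_{V⁻} + ‖ξ‖² + ‖u‖²_V with graph norms on V⁻ and V. -/
/-!
Write `x = (σ, ξ, u)`, split `u = dm ρ + u⊥` with `dm ρ` the component of `u` in `ker d` (it lies in
`range dm` because the harmonic space is trivial, and `ρ` can be taken with `‖ρ‖ ≤ cP ‖dm ρ‖`), and
`‖u⊥‖ ≤ cP ‖d u‖`. Test against `(k σ + ρ, k (ξ + d u), k (dm σ - u))` with `k = 1 + cP²`: the
`(σ, ξ, -u)` part yields exactly `‖σ‖² + ‖ξ‖²`, the `d u` and `dm σ` parts yield `‖d u‖²` and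
`‖dm σ‖²` (as `d ∘ dm = 0`), and `ρ` yields `‖dm ρ‖²`. After Cauchy–Schwarz the form is at least
half the squared graph norm of `x`, while the test triple has graph norm at most `3k`; normalising
it gives the constant `1 / (6k)`.
-/

open RealInnerProductSpace

section Poincare

variable {E F : Type*} [NormedAddCommGroup E] [InnerProductSpace ℝ E] [CompleteSpace E]
  [NormedAddCommGroup F] [NormedSpace ℝ F] (f : E →L[ℝ] F)

theorem map_starProjection_orthogonal_ker (x : E) :
    f ((LinearMap.ker (f : E →ₗ[ℝ] F))ᗮ.starProjection x) = f x := by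
  have hker : f ((LinearMap.ker (f : E →ₗ[ℝ] F)).starProjection x) = 0 :=
    Submodule.starProjection_apply_mem (LinearMap.ker (f : E →ₗ[ℝ] F)) x
  rw [Submodule.starProjection_orthogonal_val, map_sub, hker, sub_zero]

variable {f} {c : ℝ}

theorem norm_starProjection_orthogonal_ker_le
    (hP : ∀ x ∈ (LinearMap.ker (f : E →ₗ[ℝ] F))ᗮ, ‖x‖ ≤ c * ‖f x‖) (x : E) :
    ‖(LinearMap.ker (f : E →ₗ[ℝ] F))ᗮ.starProjection x‖ ≤ c * ‖f x‖ := by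
  simpa only [map_starProjection_orthogonal_ker] using
    hP _ (Submodule.starProjection_apply_mem _ x)

theorem exists_apply_eq_norm_le_of_poincare
    (hP : ∀ x ∈ (LinearMap.ker (f : E →ₗ[ℝ] F))ᗮ, ‖x‖ ≤ c * ‖f x‖) {y : F} (hy : y ∈ Set.range f) :
    ∃ x, f x = y ∧ ‖x‖ ≤ c * ‖y‖ := by
  obtain ⟨x, rfl⟩ := hy
  exact ⟨_, map_starProjection_orthogonal_ker f x, norm_starProjection_orthogonal_ker_le hP x⟩

theorem norm_sq_le_starProjection_ker_add_of_poincare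
    (hP : ∀ x ∈ (LinearMap.ker (f : E →ₗ[ℝ] F))ᗮ, ‖x‖ ≤ c * ‖f x‖) (x : E) :
    ‖x‖ ^ 2 ≤ ‖(LinearMap.ker (f : E →ₗ[ℝ] F)).starProjection x‖ ^ 2 + c ^ 2 * ‖f x‖ ^ 2 := by
  rw [(LinearMap.ker (f : E →ₗ[ℝ] F)).norm_sq_eq_add_norm_sq_starProjection x, ← mul_pow]
  gcongr
  exact norm_starProjection_orthogonal_ker_le hP x

end Poincare

theorem real_inner_starProjection_self {E : Type*} [NormedAddCommGroup E] [InnerProductSpace ℝ E]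
    (K : Submodule ℝ E) [K.HasOrthogonalProjection] (x : E) :
    ⟪K.starProjection x, x⟫ = ‖K.starProjection x‖ ^ 2 := by
  simpa using K.re_inner_starProjection_eq_normSq x

section TwoMul

variable {E : Type*} [SeminormedAddCommGroup E] (a b : E)

theorem norm_add_sq_le_two_mul : ‖a + b‖ ^ 2 ≤ 2 * (‖a‖ ^ 2 + ‖b‖ ^ 2) :=
  (pow_le_pow_left₀ (norm_nonneg _) (norm_add_le a b) 2).trans add_sq_le

theorem norm_sub_sq_le_two_mul : ‖a - b‖ ^ 2 ≤ 2 * (‖a‖ ^ 2 + ‖b‖ ^ 2) :=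
  (pow_le_pow_left₀ (norm_nonneg _) (norm_sub_le a b) 2).trans add_sq_le

end TwoMul

namespace HilbertComplex

variable {Vm V W : Type*} [NormedAddCommGroup Vm] [InnerProductSpace ℝ Vm]
  [NormedAddCommGroup V] [InnerProductSpace ℝ V] [NormedAddCommGroup W] [InnerProductSpace ℝ W]
  (dm : Vm →L[ℝ] V) (d : V →L[ℝ] W)

def graphNormSq (σ : Vm) (ξ : W) (u : V) : ℝ :=
  ‖σ‖ ^ 2 + ‖dm σ‖ ^ 2 + ‖ξ‖ ^ 2 + ‖u‖ ^ 2 + ‖d u‖ ^ 2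

def mixedForm (σ : Vm) (ξ : W) (u : V) (τ : Vm) (η : W) (v : V) : ℝ :=
  ⟪σ, τ⟫ + ⟪ξ, η⟫ + ⟪dm σ, v⟫ + ⟪ξ, d v⟫ + ⟪dm τ, u⟫ + ⟪η, d u⟫

theorem graphNormSq_smul (a : ℝ) (σ : Vm) (ξ : W) (u : V) :
    graphNormSq dm d (a • σ) (a • ξ) (a • u) = a ^ 2 * graphNormSq dm d σ ξ u := by
  simp only [graphNormSq, map_smul, norm_smul, Real.norm_eq_abs, mul_pow, sq_abs]
  ring

theorem mixedForm_smul_right (a : ℝ) (σ : Vm) (ξ : W) (u : V) (τ : Vm) (η : W) (v : V) :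
    mixedForm dm d σ ξ u (a • τ) (a • η) (a • v) = a * mixedForm dm d σ ξ u τ η v := by
  simp only [mixedForm, map_smul, real_inner_smul_left, real_inner_smul_right]
  ring

theorem eq_zero_of_graphNormSq_eq_zero {τ : Vm} {η : W} {v : V}
    (h : graphNormSq dm d τ η v = 0) : τ = 0 ∧ η = 0 ∧ v = 0 := by
  simp only [graphNormSq] at h
  refine ⟨?_, ?_, ?_⟩ <;> rw [← norm_eq_zero, ← pow_eq_zero_iff two_ne_zero] <;>
    linarith [sq_nonneg ‖τ‖, sq_nonneg ‖dm τ‖, sq_nonneg ‖η‖, sq_nonneg ‖v‖, sq_nonneg ‖d v‖]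

theorem exists_graphNormSq_eq_one_le_mixedForm {σ : Vm} {ξ : W} {u : V} {τ : Vm} {η : W} {v : V}
    {α M : ℝ} (hα : 0 < α) (hM : 0 < M) (hB : α ≤ mixedForm dm d σ ξ u τ η v)
    (hN : graphNormSq dm d τ η v ≤ M ^ 2) :
    ∃ (τ' : Vm) (η' : W) (v' : V),
      graphNormSq dm d τ' η' v' = 1 ∧ α / M ≤ mixedForm dm d σ ξ u τ' η' v' := by
  have hpos : 0 < graphNormSq dm d τ η v := by
    refine lt_of_le_of_ne (by unfold graphNormSq; positivity) fun h => ?_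
    obtain ⟨rfl, rfl, rfl⟩ := eq_zero_of_graphNormSq_eq_zero dm d h.symm
    simp only [mixedForm, map_zero, inner_zero_left, inner_zero_right, add_zero] at hB
    linarith
  set t := √(graphNormSq dm d τ η v)
  have ht : 0 < t := Real.sqrt_pos.mpr hpos
  refine ⟨t⁻¹ • τ, t⁻¹ • η, t⁻¹ • v, ?_, ?_⟩
  · rw [graphNormSq_smul, inv_pow, Real.sq_sqrt hpos.le, inv_mul_cancel₀ hpos.ne']
  · rw [mixedForm_smul_right, inv_mul_eq_div]
    exact div_le_div₀ (hα.le.trans hB) hB ht ((Real.sqrt_le_left hM.le).mpr hN)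

/-- `dm ρ` is the orthogonal projection of `u` onto `ker d`. -/
theorem exists_lift_starProjection_ker [CompleteSpace Vm] [CompleteSpace V] {c : ℝ}
    (hP : ∀ v ∈ (LinearMap.ker (d : V →ₗ[ℝ] W))ᗮ, ‖v‖ ≤ c * ‖d v‖)
    (hP' : ∀ τ ∈ (LinearMap.ker (dm : Vm →ₗ[ℝ] V))ᗮ, ‖τ‖ ≤ c * ‖dm τ‖)
    (hharmonic : ∀ v : V, d v = 0 → v ∈ Set.range dm) (u : V) :
    ∃ ρ : Vm, ⟪dm ρ, u⟫ = ‖dm ρ‖ ^ 2 ∧ ‖ρ‖ ≤ c * ‖dm ρ‖ ∧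
      ‖u‖ ^ 2 ≤ ‖dm ρ‖ ^ 2 + c ^ 2 * ‖d u‖ ^ 2 := by
  set K := LinearMap.ker (d : V →ₗ[ℝ] W)
  obtain ⟨ρ, hρ, hρc⟩ :=
    exists_apply_eq_norm_le_of_poincare hP' (hharmonic _ (K.starProjection_apply_mem u))
  refine ⟨ρ, ?_, by rwa [hρ], ?_⟩
  · rw [hρ, real_inner_starProjection_self]
  · rw [hρ]
    exact norm_sq_le_starProjection_ker_add_of_poincare hP u

variable {dm d}

theorem mixedForm_test_eq (hcomplex : ∀ τ : Vm, d (dm τ) = 0) (k : ℝ) (σ : Vm) (ξ : W) (u : V)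
    (ρ : Vm) (hρu : ⟪dm ρ, u⟫ = ‖dm ρ‖ ^ 2) :
    mixedForm dm d σ ξ u (k • σ + ρ) (k • (ξ + d u)) (k • (dm σ - u)) =
      k * (‖σ‖ ^ 2 + ‖dm σ‖ ^ 2 + ‖ξ‖ ^ 2 + ‖d u‖ ^ 2 + ⟪ξ, d u⟫) + ⟪σ, ρ⟫ + ‖dm ρ‖ ^ 2 := by
  simp only [mixedForm, map_add, map_sub, map_smul, hcomplex, inner_add_left, inner_add_right,
    inner_sub_right, real_inner_smul_left, real_inner_smul_right, real_inner_self_eq_norm_sq,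
    inner_zero_right, hρu]
  ring

theorem graphNormSq_le_two_mul_mixedForm_test (hcomplex : ∀ τ : Vm, d (dm τ) = 0) {c : ℝ}
    (σ : Vm) (ξ : W) {u : V} {ρ : Vm} (hρu : ⟪dm ρ, u⟫ = ‖dm ρ‖ ^ 2) (hρ : ‖ρ‖ ≤ c * ‖dm ρ‖)
    (hu : ‖u‖ ^ 2 ≤ ‖dm ρ‖ ^ 2 + c ^ 2 * ‖d u‖ ^ 2) :
    graphNormSq dm d σ ξ u ≤
      2 * mixedForm dm d σ ξ u ((1 + c ^ 2) • σ + ρ) ((1 + c ^ 2) • (ξ + d u))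
        ((1 + c ^ 2) • (dm σ - u)) := by
  rw [mixedForm_test_eq hcomplex _ σ ξ u ρ hρu, graphNormSq]
  have hξ : -(‖ξ‖ * ‖d u‖) ≤ ⟪ξ, d u⟫ := neg_le_of_abs_le (abs_real_inner_le_norm _ _)
  have hσ : -(‖σ‖ * ‖ρ‖) ≤ ⟪σ, ρ⟫ := neg_le_of_abs_le (abs_real_inner_le_norm _ _)
  have hσρ : 2 * (‖σ‖ * ‖ρ‖) ≤ c ^ 2 * ‖σ‖ ^ 2 + ‖dm ρ‖ ^ 2 := by
    nlinarith [mul_le_mul_of_nonneg_left hρ (norm_nonneg σ), sq_nonneg (c * ‖σ‖ - ‖dm ρ‖)]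
  have hξu : 2 * ‖ξ‖ * ‖d u‖ ≤ ‖ξ‖ ^ 2 + ‖d u‖ ^ 2 := two_mul_le_add_sq _ _
  nlinarith [mul_le_mul_of_nonneg_left hξu (by positivity : (0 : ℝ) ≤ 1 + c ^ 2),
    sq_nonneg (c * ‖σ‖), sq_nonneg (c * ‖ξ‖), sq_nonneg (c * ‖dm σ‖), sq_nonneg (c * ‖d u‖)]

theorem graphNormSq_test_le (hcomplex : ∀ τ : Vm, d (dm τ) = 0) {c : ℝ}
    (σ : Vm) (ξ : W) {u : V} {ρ : Vm} (hρu : ⟪dm ρ, u⟫ = ‖dm ρ‖ ^ 2) (hρ : ‖ρ‖ ≤ c * ‖dm ρ‖) :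
    graphNormSq dm d ((1 + c ^ 2) • σ + ρ) ((1 + c ^ 2) • (ξ + d u)) ((1 + c ^ 2) • (dm σ - u))
      ≤ (3 * (1 + c ^ 2)) ^ 2 * graphNormSq dm d σ ξ u := by
  set k := 1 + c ^ 2
  have hk : 1 ≤ k := le_add_of_nonneg_right (sq_nonneg c)
  have hdmρ : ‖dm ρ‖ ≤ ‖u‖ := by
    have := hρu ▸ real_inner_le_norm (dm ρ) u
    nlinarith [norm_nonneg (dm ρ), norm_nonneg u]
  have hρ2 : ‖ρ‖ ^ 2 ≤ k * ‖u‖ ^ 2 := by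
    calc ‖ρ‖ ^ 2 ≤ (c * ‖dm ρ‖) ^ 2 := pow_le_pow_left₀ (norm_nonneg _) hρ 2
      _ ≤ k * ‖u‖ ^ 2 := by rw [mul_pow]; gcongr; exact le_add_of_nonneg_left zero_le_one
  have h1 := norm_add_sq_le_two_mul (k • σ) ρ
  have h2 := norm_add_sq_le_two_mul (k • dm σ) (dm ρ)
  have h3 := norm_add_sq_le_two_mul ξ (d u)
  have h4 := norm_sub_sq_le_two_mul (dm σ) u
  simp only [graphNormSq, map_add, map_smul, map_sub, hcomplex, zero_sub, norm_neg, norm_smul,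
    Real.norm_eq_abs, abs_of_pos (by positivity : 0 < k), mul_pow] at h1 h2 ⊢
  nlinarith [pow_le_pow_left₀ (norm_nonneg _) hdmρ 2]

end HilbertComplex

open HilbertComplex

theorem stmt7_general
    {Vm V W : Type*} [NormedAddCommGroup Vm] [InnerProductSpace ℝ Vm] [CompleteSpace Vm]
    [NormedAddCommGroup V] [InnerProductSpace ℝ V] [CompleteSpace V]
    [NormedAddCommGroup W] [InnerProductSpace ℝ W]
    (dm : Vm →L[ℝ] V) (d : V →L[ℝ] W)
    (hcomplex : ∀ τ : Vm, d (dm τ) = 0)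
    (cP : ℝ)
    (hPoincare : ∀ v ∈ (LinearMap.ker (d : V →ₗ[ℝ] W))ᗮ, ‖v‖ ≤ cP * ‖d v‖)
    (hPoincare' : ∀ τ ∈ (LinearMap.ker (dm : Vm →ₗ[ℝ] V))ᗮ, ‖τ‖ ≤ cP * ‖dm τ‖)
    (hharmonic : ∀ v : V, d v = 0 → v ∈ Set.range dm) :
    ∃ Ccts : ℝ, 0 < Ccts ∧ ∀ (σ : Vm) (ξ : W) (u : V),
      ‖σ‖ ^ 2 + ‖dm σ‖ ^ 2 + ‖ξ‖ ^ 2 + ‖u‖ ^ 2 + ‖d u‖ ^ 2 = 1 →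
      ∃ (τ : Vm) (η : W) (v : V),
        ‖τ‖ ^ 2 + ‖dm τ‖ ^ 2 + ‖η‖ ^ 2 + ‖v‖ ^ 2 + ‖d v‖ ^ 2 = 1 ∧
        ⟪σ, τ⟫ + ⟪ξ, η⟫ + ⟪dm σ, v⟫ + ⟪ξ, d v⟫ + ⟪dm τ, u⟫ + ⟪η, d u⟫ ≥ Ccts := by
  refine ⟨1 / 2 / (3 * (1 + cP ^ 2)), by positivity, fun σ ξ u hx => ?_⟩
  obtain ⟨ρ, hρu, hρ, hu⟩ := exists_lift_starProjection_ker dm d hPoincare hPoincare' hharmonic u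
  have hlower := graphNormSq_le_two_mul_mixedForm_test hcomplex σ ξ hρu hρ hu
  have hupper := graphNormSq_test_le hcomplex σ ξ hρu hρ
  rw [show graphNormSq dm d σ ξ u = 1 from hx] at hlower hupper
  exact exists_graphNormSq_eq_one_le_mixedForm dm d (by norm_num) (by positivity)
    (by linarith) (hupper.trans_eq (mul_one _))

/-- continuous inf-sup condition for the mixed formulation of the Hodge Laplacian
on a closed Hilbert complex `(V⁻, d⁻) → (V, d) → W` with Poincaré inequalities and trivial
harmonic space; norms on `V⁻` and `V` are graph norms. -/
theorem stmt7
    {Vm V W : Type*} [NormedAddCommGroup Vm] [InnerProductSpace ℝ Vm] [CompleteSpace Vm]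
    [NormedAddCommGroup V] [InnerProductSpace ℝ V] [CompleteSpace V]
    [NormedAddCommGroup W] [InnerProductSpace ℝ W] [CompleteSpace W]
    (dm : Vm →L[ℝ] V) (d : V →L[ℝ] W)
    (hcomplex : ∀ τ : Vm, d (dm τ) = 0)
    (hrange_dm : IsClosed (Set.range dm)) (hrange_d : IsClosed (Set.range d))
    (cP : ℝ) (hcP : 0 < cP)
    (hPoincare : ∀ v ∈ (LinearMap.ker (d : V →ₗ[ℝ] W))ᗮ, ‖v‖ ≤ cP * ‖d v‖)
    (hPoincare' : ∀ τ ∈ (LinearMap.ker (dm : Vm →ₗ[ℝ] V))ᗮ, ‖τ‖ ≤ cP * ‖dm τ‖)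
    (hharmonic : ∀ v : V, d v = 0 → v ∈ Set.range dm) :
    ∃ Ccts : ℝ, 0 < Ccts ∧ ∀ (σ : Vm) (ξ : W) (u : V),
      ‖σ‖ ^ 2 + ‖dm σ‖ ^ 2 + ‖ξ‖ ^ 2 + ‖u‖ ^ 2 + ‖d u‖ ^ 2 = 1 →
      ∃ (τ : Vm) (η : W) (v : V),
        ‖τ‖ ^ 2 + ‖dm τ‖ ^ 2 + ‖η‖ ^ 2 + ‖v‖ ^ 2 + ‖d v‖ ^ 2 = 1 ∧
        ⟪σ, τ⟫ + ⟪ξ, η⟫ + ⟪dm σ, v⟫ + ⟪ξ, d v⟫ + ⟪dm τ, u⟫ + ⟪η, d u⟫ ≥ Ccts :=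
  stmt7_general dm d hcomplex cP hPoincare hPoincare' hharmonic
end

section
/- Let V_h ⊆ V be a closed subspace of a Hilbert space, d : V → W bounded linear with d(V_h) ⊆ W_h for a closed subspace W_h ⊆ W, and suppose the discrete Poincaré inequality ‖v_h‖ ≤ c_dP ‖d v_h‖ holds for all v_h in V_h orthogonal (in V_h) to ker(d|_{V_h}). If moreover every element of ker(d|_{V_h}) lies in the range of a bounded operator d⁻ restricted to a subspace V_h⁻ (discrete exactness), then every v_h ∈ V_h decomposes as v_h = d⁻ τ_h + v_h^⊥ with τ_h ∈ V_h⁻, v_h^⊥ ⟂ ker(d|_{V_h}), ‖v_h^⊥‖ ≤ c_dP ‖d v_h‖, and ‖d⁻ τ_h‖ ≤ ‖v_h‖. -/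
open RealInnerProductSpace

/-!
Let `𝔷_h = V_h ∩ ker d` be the discrete kernel. It is closed, so `v ∈ V_h` splits
orthogonally as `v = z + (v - z)` with `z` its projection onto `𝔷_h`. The projection is a
contraction, so `‖z‖ ≤ ‖v‖`; discrete exactness writes `z = d⁻ τ`; and `v - z ∈ V_h` is
orthogonal to `𝔷_h` with `d (v - z) = d v`, so the discrete Poincaré inequality bounds it
by `c_dP ‖d v‖`.
-/

section DiscreteKernel

variable {V W : Type*} [NormedAddCommGroup V] [InnerProductSpace ℝ V]
  [NormedAddCommGroup W] [InnerProductSpace ℝ W]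

def discreteKernel (Vh : Submodule ℝ V) (d : V →L[ℝ] W) : Submodule ℝ V :=
  Vh ⊓ LinearMap.ker (d : V →ₗ[ℝ] W)

theorem mem_discreteKernel {Vh : Submodule ℝ V} {d : V →L[ℝ] W} {z : V} :
    z ∈ discreteKernel Vh d ↔ z ∈ Vh ∧ d z = 0 :=
  Iff.rfl

theorem isClosed_discreteKernel {Vh : Submodule ℝ V} (hVh : IsClosed (Vh : Set V))
    (d : V →L[ℝ] W) : IsClosed (discreteKernel Vh d : Set V) :=
  hVh.inter d.isClosed_ker

theorem inner_eq_zero_of_mem_discreteKernel_orthogonal {Vh : Submodule ℝ V} {d : V →L[ℝ] W}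
    {u : V} (hu : u ∈ (discreteKernel Vh d)ᗮ) : ∀ z ∈ Vh, d z = 0 → ⟪u, z⟫ = 0 :=
  fun _ hz hdz => Submodule.inner_left_of_mem_orthogonal (mem_discreteKernel.mpr ⟨hz, hdz⟩) hu

end DiscreteKernel

theorem stmt9_general
    {Vm V W : Type*} [NormedAddCommGroup Vm] [InnerProductSpace ℝ Vm]
    [NormedAddCommGroup V] [InnerProductSpace ℝ V] [CompleteSpace V]
    [NormedAddCommGroup W] [InnerProductSpace ℝ W]
    (dm : Vm →L[ℝ] V) (d : V →L[ℝ] W)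
    (Vhm : Submodule ℝ Vm) (Vh : Submodule ℝ V)
    (hVh_closed : IsClosed (Vh : Set V))
    (cdP : ℝ)
    (hdPoincare : ∀ v ∈ Vh, (∀ z ∈ Vh, d z = 0 → ⟪v, z⟫ = 0) → ‖v‖ ≤ cdP * ‖d v‖)
    (hexact : ∀ z ∈ Vh, d z = 0 → ∃ τ ∈ Vhm, dm τ = z) :
    ∀ v ∈ Vh, ∃ τ ∈ Vhm, ∃ vp : V,
      v = dm τ + vp ∧ (∀ z ∈ Vh, d z = 0 → ⟪vp, z⟫ = 0) ∧
      ‖vp‖ ≤ cdP * ‖d v‖ ∧ ‖dm τ‖ ≤ ‖v‖ := by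
  intro v hv
  set K := discreteKernel Vh d
  have : CompleteSpace K := (isClosed_discreteKernel hVh_closed d).completeSpace_coe
  obtain ⟨hzVh, hdz⟩ := mem_discreteKernel.mp (K.starProjection_apply_mem v)
  obtain ⟨τ, hτ, hdmτ⟩ := hexact _ hzVh hdz
  have horth :=
    inner_eq_zero_of_mem_discreteKernel_orthogonal (K.sub_starProjection_mem_orthogonal v)
  have hd : d (v - K.starProjection v) = d v := by rw [map_sub, hdz, sub_zero]
  refine ⟨τ, hτ, v - K.starProjection v, by rw [hdmτ, add_sub_cancel], horth, ?_, ?_⟩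
  · simpa only [hd] using hdPoincare _ (Vh.sub_mem hv hzVh) horth
  · simpa only [hdmτ] using K.norm_starProjection_apply_le v

/-- discrete Hodge decomposition with discrete Poincaré inequality:
every `v_h ∈ V_h` decomposes as `v_h = d⁻ τ_h + v_h^⊥` with `τ_h ∈ V_h⁻`,
`v_h^⊥ ⟂ ker(d|_{V_h})`, `‖v_h^⊥‖ ≤ c_dP ‖d v_h‖` and `‖d⁻ τ_h‖ ≤ ‖v_h‖`. -/
theorem stmt9
    {Vm V W : Type*} [NormedAddCommGroup Vm] [InnerProductSpace ℝ Vm]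
    [NormedAddCommGroup V] [InnerProductSpace ℝ V] [CompleteSpace V]
    [NormedAddCommGroup W] [InnerProductSpace ℝ W]
    (dm : Vm →L[ℝ] V) (d : V →L[ℝ] W)
    (Vhm : Submodule ℝ Vm) (Vh : Submodule ℝ V) (Wh : Submodule ℝ W)
    (hVh_closed : IsClosed (Vh : Set V))
    (hmap : ∀ v ∈ Vh, d v ∈ Wh)
    (hsub : ∀ τ ∈ Vhm, dm τ ∈ Vh)
    (cdP : ℝ) (hcdP : 0 < cdP)
    (hdPoincare : ∀ v ∈ Vh, (∀ z ∈ Vh, d z = 0 → ⟪v, z⟫ = 0) → ‖v‖ ≤ cdP * ‖d v‖)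
    (hexact : ∀ z ∈ Vh, d z = 0 → ∃ τ ∈ Vhm, dm τ = z) :
    ∀ v ∈ Vh, ∃ τ ∈ Vhm, ∃ vp : V,
      v = dm τ + vp ∧ (∀ z ∈ Vh, d z = 0 → ⟪vp, z⟫ = 0) ∧
      ‖vp‖ ≤ cdP * ‖d v‖ ∧ ‖dm τ‖ ≤ ‖v‖ :=
  stmt9_general dm d Vhm Vh hVh_closed cdP hdPoincare hexact
end

section
/- With penalty parameters satisfying c = 1/(4b) and d = 1/(4a), and check-variable relations ⋆̄ σ̌ = a [tr ⋆u], ξ̌* = b ⋆̄ [tr u], ⋆̄ ǔ = c [tr ⋆ξ], ǔ* = d ⋆̄ [tr σ], together with û = ǔ + {tr u}_avg and ξ̂* = ξ̌* + {tr ⋆ξ}_avg, the following flux identity holds on each element boundary ∂T: ⟨⋆̄(û − tr u), tr ⋆η⟩ˢ_{∂T} = ⟨2c (tr ⋆ξ − ξ̂*), tr ⋆η⟩_{∂T}, using the one-sided trace identities tr u − {tr u}_avg = (s_T/2)[tr u] and (s_T/2)[tr ⋆ξ] + {tr ⋆ξ}_avg = tr ⋆ξ on ∂T. -/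
/-- the hybridization flux identity (per face, with the face Hodge star absorbed
into the scalar face values): with `c = 1/(4b)`, `û = ǔ + {tr u}`, `⋆̄ǔ = c [tr ⋆ξ]`,
`tr u − {tr u} = (s/2)[tr u]`, `ξ̂* = ξ̌* + {tr ⋆ξ}`, `ξ̌* = b ⋆̄[tr u]`,
`(s/2)[tr ⋆ξ] + {tr ⋆ξ} = tr ⋆ξ`, one gets
`⟨⋆̄(û − tr u), tr ⋆η⟩ˢ_{∂T} = ⟨2c(tr ⋆ξ − ξ̂*), tr ⋆η⟩_{∂T}`, i.e. pointwise
`s (û − tr u) = 2c (tr ⋆ξ − ξ̂*)`. -/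
theorem stmt13 (s b c ju jxi avgU avgXi traceU traceXi uhat xihat : ℝ)
    (hs : s = 1 ∨ s = -1) (hb : b ≠ 0) (hc : c = 1 / (4 * b))
    (huhat : uhat = c * jxi + avgU)
    (htraceU : traceU - avgU = (s / 2) * ju)
    (hxihat : xihat = b * ju + avgXi)
    (htraceXi : (s / 2) * jxi + avgXi = traceXi) :
    s * (uhat - traceU) = 2 * c * (traceXi - xihat) := by
  subst hc huhat hxihat
  have h1 : traceU = (s / 2) * ju + avgU := by linarith
  subst h1
  subst htraceXi
  rcases hs with rfl | rfl <;> field_simp <;> ring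
end
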